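/- Let n ≥ 2 and let a 2-action polymatrix game with n players and partial payoffs α_{ji} be given. Define a linear influence game on the same players with weights w_{ji} = (1/4)·(α_{ji}(1,1) − α_{ji}(−1,1) − α_{ji}(1,−1) + α_{ji}(−1,−1)) for j ≠ i, and thresholds b_i = −(1/4)·Σ_{j≠i} (α_{ji}(1,1) + α_{ji}(−1,1) − α_{ji}(1,−1) − α_{ji}(−1,−1)). Then a joint action x ∈ {−1,1}^n is a pure-strategy Nash equilibrium of the polymatrix game if and only if it is a pure-strategy Nash equilibrium of this linear influence game. -/

import Mathlib

/-! On `{±1}²` every function expands as `f a b = c₀ + c₁ a + c₂ b + c₃ a b`, with `c₃` and `c₂`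
the two quarter-sums appearing as LIG weight and (minus) threshold contribution. Hence
`f a b - f a (-b) = 2 b (c₃ a + c₂)`, and summing over the opponents of player `i` shows that
the polymatrix gain `M_i(x) - M_i(-x_i, x_{-i})` is exactly twice the LIG quantity
`x_i (∑ w_{ji} x_j - b_i)`, so the two equilibrium conditions agree player by player. -/

open Finset

theorem sub_apply_neg_eq_of_sign (f : ℝ → ℝ → ℝ) {a b : ℝ} (ha : a = 1 ∨ a = -1)
    (hb : b = 1 ∨ b = -1) :
    f a b - f a (-b) =
      2 * (b * ((1 / 4) * (f 1 1 - f (-1) 1 - f 1 (-1) + f (-1) (-1)) * a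
        + (1 / 4) * (f 1 1 + f (-1) 1 - f 1 (-1) - f (-1) (-1)))) := by
  rcases ha with rfl | rfl <;> rcases hb with rfl | rfl <;> norm_num <;> ring

theorem sum_sub_sum_apply_neg_eq_of_sign {ι : Type*} (s : Finset ι) (g : ι → ℝ → ℝ → ℝ)
    (y : ι → ℝ) (hy : ∀ j, y j = 1 ∨ y j = -1) {c : ℝ} (hc : c = 1 ∨ c = -1) :
    ∑ j ∈ s, g j (y j) c - ∑ j ∈ s, g j (y j) (-c) =
      2 * (c * ((∑ j ∈ s,
            ((1 / 4) * (g j 1 1 - g j (-1) 1 - g j 1 (-1) + g j (-1) (-1))) * y j)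
          - (-(1 / 4) * ∑ j ∈ s, (g j 1 1 + g j (-1) 1 - g j 1 (-1) - g j (-1) (-1))))) := by
  rw [← sum_sub_distrib, sum_congr rfl fun j _ => sub_apply_neg_eq_of_sign (g j) (hy j) hc,
    ← mul_sum, ← mul_sum, sum_add_distrib, ← mul_sum]
  ring

theorem polymatrix_to_lig_same_psne (n : ℕ)
    (α : Fin n → Fin n → ℝ → ℝ → ℝ)
    (x : Fin n → ℝ) (hx : ∀ i, x i = 1 ∨ x i = -1) :
    (∀ i : Fin n,
        (∑ j ∈ univ.filter (· ≠ i), α j i (x j) (x i)) ≥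
          ∑ j ∈ univ.filter (· ≠ i), α j i (x j) (-x i))
      ↔
    (∀ i : Fin n,
        x i * ((∑ j ∈ univ.filter (· ≠ i),
            ((1 / 4) * (α j i 1 1 - α j i (-1) 1 - α j i 1 (-1) + α j i (-1) (-1))) * x j)
          - (-(1 / 4) * ∑ j ∈ univ.filter (· ≠ i),
              (α j i 1 1 + α j i (-1) 1 - α j i 1 (-1) - α j i (-1) (-1)))) ≥ 0) := by
  refine forall_congr' fun i => ?_
  rw [ge_iff_le, ← sub_nonneg,
    sum_sub_sum_apply_neg_eq_of_sign _ (fun j => α j i) x hx (hx i)]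
  exact mul_nonneg_iff_of_pos_left two_pos
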